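/- Let Φ be a nonzero homogeneous harmonic polynomial of degree s in ℝ[y₁,…,yₙ] with n ≥ 1. Then for every k ≥ 0, tr^k(g^k Φ) ≠ 0 while tr^{k+1}(g^k Φ) = 0; i.e. the 'depth' of g^k Φ, defined as the largest m with tr^m applied to it nonzero, equals k. -/

import Mathlib

/-!
The Laplacian and multiplication by `r²` satisfy `[tr, g] = 4N + 2n` and `[N, g] = 2g`. Hence
`g^k Φ` is an eigenvector of `N` with eigenvalue `s + 2k`, and for harmonic `Φ` each application of
`tr` lowers `g^{k+1} Φ` to the positive multiple `2(k+1)(2s + n + 2k)` of `g^k Φ`. So `tr^k (g^k Φ)`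
is a positive multiple of `Φ`, and one more `tr` kills it.
-/

open MvPolynomial Finset

/-- The index-counting (Euler) operator `N = Σᵢ yᵢ ∂/∂yᵢ` on `ℝ[y₁,…,yₙ]`. -/
noncomputable def opN (n : ℕ) : Module.End ℝ (MvPolynomial (Fin n) ℝ) :=
  ∑ i : Fin n, (LinearMap.mulLeft ℝ (X i)) ∘ₗ (pderiv i).toLinearMap

/-- Multiplication by `Σᵢ yᵢ²` on `ℝ[y₁,…,yₙ]`. -/
noncomputable def opG (n : ℕ) : Module.End ℝ (MvPolynomial (Fin n) ℝ) :=
  LinearMap.mulLeft ℝ (∑ i : Fin n, X i ^ 2)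

/-- The trace (Laplacian) operator `tr = Σᵢ ∂²/∂yᵢ²` on `ℝ[y₁,…,yₙ]`. -/
noncomputable def opTr (n : ℕ) : Module.End ℝ (MvPolynomial (Fin n) ℝ) :=
  ∑ i : Fin n, (pderiv i).toLinearMap ∘ₗ (pderiv i).toLinearMap

theorem MvPolynomial.pderiv_sum_X_sq {R σ : Type*} [CommSemiring R] [Fintype σ] [DecidableEq σ]
    (i : σ) : pderiv i (∑ j : σ, (X j : MvPolynomial σ R) ^ 2) = 2 * X i := by
  simp [map_sum, pderiv_X, Pi.single_apply]

section Operators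

variable {n : ℕ}

theorem opTr_opG_apply (f : MvPolynomial (Fin n) ℝ) :
    opTr n (opG n f) = opG n (opTr n f) + (4 : ℝ) • opN n f + (2 * n : ℝ) • f := by
  have hconst : (2 * n : ℝ) • f = ∑ _i : Fin n, (2 : ℝ) • f := by
    rw [sum_const, card_univ, Fintype.card_fin, ← Nat.cast_smul_eq_nsmul ℝ, smul_smul, mul_comm]
  simp only [opTr, opG, opN, LinearMap.sum_apply, LinearMap.comp_apply, LinearMap.mulLeft_apply,
    Derivation.coeFn_coe, mul_sum, smul_sum, hconst, ← sum_add_distrib]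
  refine sum_congr rfl fun i _ => ?_
  have hderiv_two : pderiv i (2 : MvPolynomial (Fin n) ℝ) = 0 := by
    rw [← map_ofNat C 2, pderiv_C]
  simp only [pderiv_mul, pderiv_sum_X_sq, pderiv_X_self, hderiv_two, map_add, smul_eq_C_mul,
    map_ofNat]
  ring

theorem opN_opG_apply (f : MvPolynomial (Fin n) ℝ) :
    opN n (opG n f) = opG n (opN n f) + (2 : ℝ) • opG n f := by
  simp only [opN, opG, LinearMap.sum_apply, LinearMap.comp_apply, LinearMap.mulLeft_apply,
    Derivation.coeFn_coe, pderiv_mul, pderiv_sum_X_sq]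
  rw [mul_sum, sum_mul, smul_sum, ← sum_add_distrib]
  refine sum_congr rfl fun i _ => ?_
  simp only [smul_eq_C_mul, map_ofNat]
  ring

variable {s : ℕ} {f : MvPolynomial (Fin n) ℝ}

theorem opN_opG_pow_apply (hf : opN n f = (s : ℝ) • f) (k : ℕ) :
    opN n ((opG n ^ k) f) = (s + 2 * k : ℝ) • (opG n ^ k) f := by
  induction k with
  | zero => simpa using hf
  | succ k ih =>
    rw [pow_succ', Module.End.mul_apply, opN_opG_apply, ih, map_smul]
    push_cast
    module

theorem opTr_opG_pow_succ_apply (hf : opN n f = (s : ℝ) • f) (hharm : opTr n f = 0) (k : ℕ) :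
    opTr n ((opG n ^ (k + 1)) f) = (2 * (k + 1) * (2 * s + n + 2 * k) : ℝ) • (opG n ^ k) f := by
  induction k with
  | zero =>
    rw [zero_add, pow_one, opTr_opG_apply, hharm, map_zero, hf, pow_zero, Module.End.one_apply]
    module
  | succ k ih =>
    rw [pow_succ' _ (k + 1), Module.End.mul_apply, opTr_opG_apply, ih, map_smul,
      opN_opG_pow_apply hf, pow_succ', Module.End.mul_apply]
    push_cast
    module

theorem opTr_pow_opG_pow_apply (hf : opN n f = (s : ℝ) • f) (hharm : opTr n f = 0) (k : ℕ) :
    (opTr n ^ k) ((opG n ^ k) f) =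
      (∏ j ∈ range k, (2 * (j + 1) * (2 * s + n + 2 * j) : ℝ)) • f := by
  induction k with
  | zero => simp
  | succ k ih =>
    rw [pow_succ, Module.End.mul_apply, opTr_opG_pow_succ_apply hf hharm, map_smul, ih,
      smul_smul, prod_range_succ, mul_comm]

end Operators

/-- for `Φ ≠ 0` harmonic homogeneous of degree `s`, `n ≥ 1`, the depth
of `g^k Φ` is exactly `k`: `tr^k(g^k Φ) ≠ 0` while `tr^{k+1}(g^k Φ) = 0`. -/
theorem stmt4 (n s : ℕ) (hn : 1 ≤ n) (Φ : MvPolynomial (Fin n) ℝ) (hΦ : Φ ≠ 0)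
    (hhom : opN n Φ = (s : ℝ) • Φ) (hharm : opTr n Φ = 0) :
    ∀ k : ℕ,
      (opTr n ^ k) ((opG n ^ k) Φ) ≠ 0 ∧ (opTr n ^ (k + 1)) ((opG n ^ k) Φ) = 0 := by
  intro k
  have hn_real : (1 : ℝ) ≤ n := by exact_mod_cast hn
  have hprod : (∏ j ∈ range k, (2 * (j + 1) * (2 * s + n + 2 * j) : ℝ)) ≠ 0 :=
    prod_ne_zero_iff.mpr fun j _ => by positivity
  refine ⟨?_, ?_⟩
  · rw [opTr_pow_opG_pow_apply hhom hharm]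
    exact smul_ne_zero hprod hΦ
  · rw [pow_succ', Module.End.mul_apply, opTr_pow_opG_pow_apply hhom hharm, map_smul, hharm,
      smul_zero]
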